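/- Let φ be a Bernstein function extended to the right half-plane. Then for all complex z = a + ib with a > 0, |φ'(a+ib)/φ(a+ib)| ≤ √10 · φ'(a)/φ(a) ≤ √10 / a. -/

import Mathlib

open MeasureTheory Filter Set

/-- A Bernstein function, given by its representing triplet `(κ, δ, μ)`:
`φ(u) = κ + δ·u + ∫₀^∞ (1 - e^{-u y}) μ(dy)`, with `κ, δ ≥ 0`,
`μ` a nonnegative measure on `(0,∞)` with `∫ min(1,y) μ(dy) < ∞`, and `φ ≢ 0`. -/
structure BernsteinFn where
  κ : ℝ
  δ : ℝ
  μ : Measure ℝ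
  hκ : 0 ≤ κ
  hδ : 0 ≤ δ
  hsupp : μ (Set.Iic 0) = 0
  hint : Integrable (fun y : ℝ => min 1 y) μ
  nontriv : ¬ (κ = 0 ∧ δ = 0 ∧ μ = 0)

/-- The Bernstein function as a real function on `(0,∞)`. -/
noncomputable def BernsteinFn.toFun (φ : BernsteinFn) (u : ℝ) : ℝ :=
  φ.κ + φ.δ * u + ∫ y, (1 - Real.exp (-(u * y))) ∂φ.μ

/-- The holomorphic extension of the Bernstein function to the right half-plane. -/
noncomputable def BernsteinFn.toFunC (φ : BernsteinFn) (z : ℂ) : ℂ :=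
  (φ.κ : ℂ) + (φ.δ : ℂ) * z + ∫ y, (1 - Complex.exp (-(z * (y : ℂ)))) ∂φ.μ

/-- The derivative of the Bernstein function: `φ'(u) = δ + ∫₀^∞ y e^{-u y} μ(dy)`. -/
noncomputable def BernsteinFn.deriv1 (φ : BernsteinFn) (u : ℝ) : ℝ :=
  φ.δ + ∫ y, y * Real.exp (-(u * y)) ∂φ.μ

/-- The derivative of the holomorphic extension: `φ'(z) = δ + ∫₀^∞ y e^{-z y} μ(dy)`. -/
noncomputable def BernsteinFn.deriv1C (φ : BernsteinFn) (z : ℂ) : ℂ :=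
  (φ.δ : ℂ) + ∫ y, (y : ℂ) * Complex.exp (-(z * (y : ℂ))) ∂φ.μ


/-! `φ(z)` and `φ'(z)` are integrals of `1 - e^{-zy}` and `y e^{-zy}`, and for `a = Re z` one has
`|y e^{-zy}| = y e^{-ay}` and `Re (1 - e^{-zy}) = 1 - e^{-ay} cos (by Im z) ≥ 1 - e^{-ay}`.
Hence `|φ'(z)| ≤ φ'(a)` and `|φ(z)| ≥ Re φ(z) ≥ φ(a) > 0`, so `|φ'(z)/φ(z)| ≤ φ'(a)/φ(a)`, which is
even better than the factor `√10`. Finally `t e^{-t} ≤ 1 - e^{-t}` integrates to `a φ'(a) ≤ φ(a)`. -/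

open scoped Complex

lemma Real.mul_exp_neg_le_one_sub_exp_neg (t : ℝ) : t * Real.exp (-t) ≤ 1 - Real.exp (-t) := by
  have h := Real.add_one_le_exp t
  have he : Real.exp t * Real.exp (-t) = 1 := by rw [← Real.exp_add, add_neg_cancel, Real.exp_zero]
  nlinarith [Real.exp_pos (-t)]

lemma Real.one_sub_exp_neg_le_min (t : ℝ) : 1 - Real.exp (-t) ≤ min 1 t := by
  refine le_min ?_ ?_
  · linarith [Real.exp_pos (-t)]
  · linarith [Real.add_one_le_exp (-t)]

lemma Real.mul_exp_neg_mul_le_inv_mul_one_sub_exp {a : ℝ} (ha : 0 < a) (y : ℝ) :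
    y * Real.exp (-(a * y)) ≤ a⁻¹ * (1 - Real.exp (-(a * y))) := by
  rw [le_inv_mul_iff₀ ha, ← mul_assoc]
  exact Real.mul_exp_neg_le_one_sub_exp_neg (a * y)

lemma Complex.norm_one_sub_exp_neg_le {w : ℂ} (hw : 0 ≤ w.re) : ‖1 - cexp (-w)‖ ≤ 2 * min 1 ‖w‖ := by
  rcases le_total ‖w‖ 1 with hw1 | hw1
  · rw [min_eq_right hw1, norm_sub_rev, ← norm_neg w]
    exact Complex.norm_exp_sub_one_le (by rwa [norm_neg])
  · have hexp : ‖cexp (-w)‖ ≤ 1 := by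
      rw [Complex.norm_exp, Real.exp_le_one_iff, Complex.neg_re]
      linarith
    calc ‖1 - cexp (-w)‖ ≤ ‖(1 : ℂ)‖ + ‖cexp (-w)‖ := norm_sub_le _ _
      _ ≤ 2 * min 1 ‖w‖ := by rw [min_eq_left hw1, norm_one]; linarith

lemma Complex.one_sub_exp_neg_mul_re (z : ℂ) (y : ℝ) :
    1 - Real.exp (-(z.re * y)) ≤ (1 - cexp (-(z * y))).re := by
  have hre : (1 - cexp (-(z * y))).re = 1 - Real.exp (-(z.re * y)) * Real.cos (-(z.im * y)) := by
    simp [Complex.exp_re]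
  rw [hre]
  nlinarith [Real.cos_le_one (-(z.im * y)), Real.exp_pos (-(z.re * y))]

lemma Complex.norm_ofReal_mul_exp_neg_mul {y : ℝ} (hy : 0 ≤ y) (z : ℂ) :
    ‖(y : ℂ) * cexp (-(z * y))‖ = y * Real.exp (-(z.re * y)) := by
  simp [Complex.norm_exp, abs_of_nonneg hy]

lemma min_one_mul_le_max_mul_min {y : ℝ} (c : ℝ) (hy : 0 ≤ y) :
    min 1 (c * y) ≤ max 1 c * min 1 y := by
  rcases le_total y 1 with hy1 | hy1
  · rw [min_eq_right hy1]
    exact (min_le_right _ _).trans (mul_le_mul_of_nonneg_right (le_max_right _ _) hy)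
  · rw [min_eq_left hy1, mul_one]
    exact (min_le_left _ _).trans (le_max_left _ _)

namespace BernsteinFn

variable (φ : BernsteinFn)

lemma ae_pos : ∀ᵐ y ∂φ.μ, 0 < y := by
  rw [ae_iff]
  simp only [not_lt]
  exact φ.hsupp

lemma integrable_of_norm_le_mul_min {E : Type*} [NormedAddCommGroup E] {f : ℝ → E}
    (hf : AEStronglyMeasurable f φ.μ) (C : ℝ) (hb : ∀ y, 0 < y → ‖f y‖ ≤ C * min 1 y) :
    Integrable f φ.μ :=
  (φ.hint.const_mul C).mono' hf (φ.ae_pos.mono hb)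

lemma integrable_one_sub_exp {a : ℝ} (ha : 0 ≤ a) :
    Integrable (fun y ↦ 1 - Real.exp (-(a * y))) φ.μ := by
  refine φ.integrable_of_norm_le_mul_min (by fun_prop) (max 1 a) fun y hy ↦ ?_
  have hay : 0 ≤ a * y := mul_nonneg ha hy.le
  have hexp : Real.exp (-(a * y)) ≤ 1 := Real.exp_le_one_iff.mpr (neg_nonpos.mpr hay)
  rw [Real.norm_of_nonneg (sub_nonneg.mpr hexp)]
  exact (Real.one_sub_exp_neg_le_min _).trans (min_one_mul_le_max_mul_min a hy.le)

lemma integrable_mul_exp {a : ℝ} (ha : 0 < a) :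
    Integrable (fun y ↦ y * Real.exp (-(a * y))) φ.μ := by
  refine ((φ.integrable_one_sub_exp ha.le).const_mul a⁻¹).mono' (by fun_prop)
    (φ.ae_pos.mono fun y hy ↦ ?_)
  rw [Real.norm_of_nonneg (by positivity)]
  exact Real.mul_exp_neg_mul_le_inv_mul_one_sub_exp ha y

lemma integrable_one_sub_cexp {z : ℂ} (hz : 0 ≤ z.re) :
    Integrable (fun y : ℝ ↦ 1 - cexp (-(z * y))) φ.μ := by
  refine φ.integrable_of_norm_le_mul_min (by fun_prop) (2 * max 1 ‖z‖) fun y hy ↦ ?_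
  have hzy : ‖z * y‖ = ‖z‖ * y := by rw [norm_mul, Complex.norm_real, Real.norm_of_nonneg hy.le]
  calc ‖1 - cexp (-(z * y))‖ ≤ 2 * min 1 (‖z‖ * y) := by
        rw [← hzy]
        exact Complex.norm_one_sub_exp_neg_le (by simpa using mul_nonneg hz hy.le)
    _ ≤ 2 * max 1 ‖z‖ * min 1 y := by
        rw [mul_assoc]
        exact mul_le_mul_of_nonneg_left (min_one_mul_le_max_mul_min ‖z‖ hy.le)
          zero_le_two

lemma deriv1_nonneg (a : ℝ) : 0 ≤ φ.deriv1 a :=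
  add_nonneg φ.hδ (integral_nonneg_of_ae (φ.ae_pos.mono fun y hy ↦ by positivity))

lemma norm_deriv1C_le (z : ℂ) : ‖φ.deriv1C z‖ ≤ φ.deriv1 z.re := by
  calc ‖φ.deriv1C z‖
      ≤ ‖(φ.δ : ℂ)‖ + ‖∫ y, (y : ℂ) * cexp (-(z * y)) ∂φ.μ‖ := norm_add_le _ _
    _ ≤ φ.δ + ∫ y, ‖(y : ℂ) * cexp (-(z * y))‖ ∂φ.μ := by
        rw [Complex.norm_real, Real.norm_of_nonneg φ.hδ]
        exact add_le_add_right (norm_integral_le_integral_norm _) _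
    _ = φ.deriv1 z.re := by
        rw [deriv1, integral_congr_ae (φ.ae_pos.mono fun y hy ↦
          Complex.norm_ofReal_mul_exp_neg_mul hy.le z)]

lemma integral_one_sub_exp_pos {a : ℝ} (ha : 0 < a) (hμ : φ.μ ≠ 0) :
    0 < ∫ y, (1 - Real.exp (-(a * y))) ∂φ.μ := by
  have hpos : ∀ᵐ y ∂φ.μ, 0 < 1 - Real.exp (-(a * y)) := φ.ae_pos.mono fun y hy ↦ by
    rw [sub_pos, Real.exp_lt_one_iff, neg_lt_zero]
    positivity
  refine (integral_nonneg_of_ae (hpos.mono fun _ h ↦ h.le)).lt_of_ne fun h0 ↦ hμ ?_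
  have hzero := (integral_eq_zero_iff_of_nonneg_ae (hpos.mono fun _ h ↦ h.le)
    (φ.integrable_one_sub_exp ha.le)).mp h0.symm
  have hfalse : ∀ᵐ _ ∂φ.μ, False := by
    filter_upwards [hpos, hzero] with y hy hy0
    exact hy.ne' hy0
  rwa [eventually_false_iff_eq_bot, ae_eq_bot] at hfalse

lemma toFun_pos {a : ℝ} (ha : 0 < a) : 0 < φ.toFun a := by
  have hlin : 0 ≤ φ.κ + φ.δ * a := add_nonneg φ.hκ (mul_nonneg φ.hδ ha.le)
  by_cases hμ : φ.μ = 0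
  · have hlin_pos : 0 < φ.κ + φ.δ * a := by
      refine hlin.lt_of_ne fun h ↦ φ.nontriv ⟨?_, ?_, hμ⟩ <;> nlinarith [φ.hκ, φ.hδ]
    simpa [toFun, hμ] using hlin_pos
  · exact add_pos_of_nonneg_of_pos hlin (φ.integral_one_sub_exp_pos ha hμ)

lemma toFun_le_re_toFunC {z : ℂ} (hz : 0 ≤ z.re) : φ.toFun z.re ≤ (φ.toFunC z).re := by
  have hint := φ.integrable_one_sub_cexp hz
  have hre : (φ.toFunC z).re = φ.κ + φ.δ * z.re + ∫ y, (1 - cexp (-(z * y))).re ∂φ.μ := by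
    simp only [toFunC, Complex.add_re, Complex.ofReal_re, Complex.re_ofReal_mul]
    exact congrArg _ (integral_re hint).symm
  rw [hre, toFun]
  exact add_le_add_right (integral_mono (φ.integrable_one_sub_exp hz) hint.re
    fun y ↦ Complex.one_sub_exp_neg_mul_re z y) _

lemma mul_deriv1_le_toFun {a : ℝ} (ha : 0 < a) : a * φ.deriv1 a ≤ φ.toFun a := by
  have hmono : a * ∫ y, y * Real.exp (-(a * y)) ∂φ.μ ≤ ∫ y, (1 - Real.exp (-(a * y))) ∂φ.μ := by
    rw [← integral_const_mul]
    exact integral_mono ((φ.integrable_mul_exp ha).const_mul a) (φ.integrable_one_sub_exp ha.le)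
      fun y ↦ by simpa only [mul_assoc] using Real.mul_exp_neg_le_one_sub_exp_neg (a * y)
  rw [deriv1, toFun, mul_add, mul_comm a φ.δ]
  linarith [φ.hκ]

lemma norm_deriv1C_div_toFunC_le {z : ℂ} (hz : 0 < z.re) :
    ‖φ.deriv1C z / φ.toFunC z‖ ≤ φ.deriv1 z.re / φ.toFun z.re := by
  rw [norm_div]
  exact div_le_div₀ (φ.deriv1_nonneg _) (φ.norm_deriv1C_le z) (φ.toFun_pos hz)
    ((φ.toFun_le_re_toFunC hz.le).trans (Complex.re_le_norm _))

lemma deriv1_div_toFun_le {a : ℝ} (ha : 0 < a) : φ.deriv1 a / φ.toFun a ≤ 1 / a := by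
  rw [div_le_div_iff₀ (φ.toFun_pos ha) ha, one_mul, mul_comm]
  exact φ.mul_deriv1_le_toFun ha

end BernsteinFn

/-- For `z = a + ib` with `a > 0`, `|φ'(z)/φ(z)| ≤ √10 · φ'(a)/φ(a) ≤ √10/a`. -/
theorem stmt7 (φ : BernsteinFn) (z : ℂ) (hz : 0 < z.re) :
    ‖φ.deriv1C z / φ.toFunC z‖
        ≤ Real.sqrt 10 * (φ.deriv1 z.re / φ.toFun z.re) ∧
      Real.sqrt 10 * (φ.deriv1 z.re / φ.toFun z.re) ≤ Real.sqrt 10 / z.re := by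
  have hratio_nonneg : 0 ≤ φ.deriv1 z.re / φ.toFun z.re :=
    div_nonneg (φ.deriv1_nonneg _) (φ.toFun_pos hz).le
  have hsqrt : 1 ≤ Real.sqrt 10 := Real.one_le_sqrt.mpr (by norm_num)
  constructor
  · exact (φ.norm_deriv1C_div_toFunC_le hz).trans (le_mul_of_one_le_left hratio_nonneg hsqrt)
  · rw [div_eq_mul_one_div (Real.sqrt 10) z.re]
    exact mul_le_mul_of_nonneg_left (φ.deriv1_div_toFun_le hz) (Real.sqrt_nonneg _)
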